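/- Let D be a connected digraph with at least 3 vertices. Then the following are equivalent: (i) ⟨D⟩ is a band (every element is idempotent); (ii) ⟨D⟩ is completely regular (every element belongs to a subgroup of ⟨D⟩); (iii) D is directed-bipartite. -/

import Mathlib

/-- The transformation of `{1,…,n}` sending `a` to `b` and fixing all other points. -/
def arcT {n : ℕ} (a b : Fin n) : Fin n → Fin n := fun v => if v = a then b else v

/-- The semigroup `⟨D⟩` generated by the arcs of the digraph `D`; transformations act on
the right, so a product `ε₁ε₂⋯ε_k` is the function `ε_k ∘ ⋯ ∘ ε₁`. -/
def genSg {n : ℕ} (D : Set (Fin n × Fin n)) : Set (Fin n → Fin n) :=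
  { α | ∃ l : List (Fin n × Fin n), l ≠ [] ∧ (∀ p ∈ l, p ∈ D) ∧
      α = l.foldl (fun f p => arcT p.1 p.2 ∘ f) id }

/-- The product `x·y` in the right-action convention: apply `x` first, then `y`. -/
def sgMul {n : ℕ} (x y : Fin n → Fin n) : Fin n → Fin n := y ∘ x

/-- The right ideal `xS¹ = {x} ∪ xS`. -/
def rIdeal {n : ℕ} (S : Set (Fin n → Fin n)) (x : Fin n → Fin n) : Set (Fin n → Fin n) :=
  insert x { y | ∃ s ∈ S, y = sgMul x s }

/-- The left ideal `S¹x = {x} ∪ Sx`. -/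
def lIdeal {n : ℕ} (S : Set (Fin n → Fin n)) (x : Fin n → Fin n) : Set (Fin n → Fin n) :=
  insert x { y | ∃ s ∈ S, y = sgMul s x }

/-- The two-sided ideal `S¹xS¹`. -/
def jIdeal {n : ℕ} (S : Set (Fin n → Fin n)) (x : Fin n → Fin n) : Set (Fin n → Fin n) :=
  { y | ∃ s ∈ insert id S, ∃ t ∈ insert id S, y = sgMul s (sgMul x t) }

def RRel {n : ℕ} (S : Set (Fin n → Fin n)) (x y : Fin n → Fin n) : Prop :=
  rIdeal S x = rIdeal S y

def LRel {n : ℕ} (S : Set (Fin n → Fin n)) (x y : Fin n → Fin n) : Prop :=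
  lIdeal S x = lIdeal S y

def JRel {n : ℕ} (S : Set (Fin n → Fin n)) (x y : Fin n → Fin n) : Prop :=
  jIdeal S x = jIdeal S y

def RTrivial {n : ℕ} (S : Set (Fin n → Fin n)) : Prop :=
  ∀ x ∈ S, ∀ y ∈ S, RRel S x y → x = y

def LTrivial {n : ℕ} (S : Set (Fin n → Fin n)) : Prop :=
  ∀ x ∈ S, ∀ y ∈ S, LRel S x y → x = y

def HTrivial {n : ℕ} (S : Set (Fin n → Fin n)) : Prop :=
  ∀ x ∈ S, ∀ y ∈ S, RRel S x y → LRel S x y → x = y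

def JTrivial {n : ℕ} (S : Set (Fin n → Fin n)) : Prop :=
  ∀ x ∈ S, ∀ y ∈ S, JRel S x y → x = y

/-- `α` has a cycle of length `k`: `k` distinct points `a₀,…,a_{k-1}` with
`α(aᵢ) = a_{i+1 mod k}`. -/
def IsCycleOf {n : ℕ} (α : Fin n → Fin n) (k : ℕ) : Prop :=
  0 < k ∧ ∃ a : ZMod k → Fin n, Function.Injective a ∧ ∀ i, α (a i) = a (i + 1)

/-- `l(D)`: the maximal length of a cycle of an element of `⟨D⟩`. -/
noncomputable def lD {n : ℕ} (D : Set (Fin n × Fin n)) : ℕ :=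
  sSup { k | ∃ α ∈ genSg D, IsCycleOf α k }

/-- The arc set of a graph. -/
def arcsOf {n : ℕ} (G : SimpleGraph (Fin n)) : Set (Fin n × Fin n) :=
  { p | G.Adj p.1 p.2 }

/-- `l(G)` for a graph `G`. -/
noncomputable def lG {n : ℕ} (G : SimpleGraph (Fin n)) : ℕ := lD (arcsOf G)

/-- Reachability along directed walks of `D`. -/
def dreach {n : ℕ} (D : Set (Fin n × Fin n)) : Fin n → Fin n → Prop :=
  Relation.ReflTransGen (fun a b => (a, b) ∈ D)

/-- The strong component of the vertex `v`. -/
def strongComp {n : ℕ} (D : Set (Fin n × Fin n)) (v : Fin n) : Set (Fin n) :=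
  { u | dreach D u v ∧ dreach D v u }

/-- The underlying graph of the digraph `D`. -/
def underlying {n : ℕ} (D : Set (Fin n × Fin n)) : SimpleGraph (Fin n) where
  Adj a b := a ≠ b ∧ ((a, b) ∈ D ∨ (b, a) ∈ D)
  symm := ⟨fun a b h => ⟨h.1.symm, h.2.symm⟩⟩
  loopless := ⟨fun a h => h.1 rfl⟩

/-- `v 0, v 1, …, v r` is a cycle of the digraph `D`. -/
def IsDCycle {n : ℕ} (D : Set (Fin n × Fin n)) (r : ℕ) (v : ℕ → Fin n) : Prop :=
  1 ≤ r ∧ v r = v 0 ∧ (∀ i < r, ∀ j < r, v i = v j → i = j) ∧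
    ∀ i < r, (v i, v (i + 1)) ∈ D

def HasDCycle {n : ℕ} (D : Set (Fin n × Fin n)) : Prop := ∃ r v, IsDCycle D r v

def DAcyclic {n : ℕ} (D : Set (Fin n × Fin n)) : Prop := ¬ HasDCycle D

/-- `G` is a subgroup contained in the transformation semigroup `S`. -/
def IsSubgroupIn {n : ℕ} (S G : Set (Fin n → Fin n)) : Prop :=
  G ⊆ S ∧ (∀ x ∈ G, ∀ y ∈ G, sgMul x y ∈ G) ∧
    ∃ e ∈ G, (∀ x ∈ G, sgMul e x = x ∧ sgMul x e = x) ∧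
      ∀ x ∈ G, ∃ y ∈ G, sgMul x y = e ∧ sgMul y x = e

/-- Every subgroup of `S` is trivial. -/
def SgAperiodic {n : ℕ} (S : Set (Fin n → Fin n)) : Prop :=
  ∀ G, IsSubgroupIn S G → G.Subsingleton

/-- `D` is directed-bipartite: the vertices split into `V₁`, `V₂` with every arc going
from `V₁` to `V₂`. -/
def DirectedBipartite {n : ℕ} (D : Set (Fin n × Fin n)) : Prop :=
  ∃ V₁ V₂ : Set (Fin n), Disjoint V₁ V₂ ∧ V₁ ∪ V₂ = Set.univ ∧
    ∀ p ∈ D, p.1 ∈ V₁ ∧ p.2 ∈ V₂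

/-!
If every arc goes from `V₁` to `V₂`, then every product of arcs fixes `V₂` pointwise and moves
points only into `V₂`, hence is idempotent, and an idempotent is a one-element subgroup.
Conversely, an element of a subgroup of a transformation semigroup is injective on its own
image; for a directed path `u → v → w` on three distinct vertices the product
`α = (v → w)(u → v)` sends `v = α u` and `w = α v` both to `w`. So in a completely regular `⟨D⟩`
no vertex is both the head and the tail of an arc: the only remaining configuration, a 2-cycle
`a ⇄ b`, extends to such a path through a third vertex adjacent to `a` or `b`, which exists by
connectivity and `n ≥ 3`. Splitting the vertices into tails of arcs and the rest then makes `D`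
directed-bipartite.
-/

def IsBand {n : ℕ} (S : Set (Fin n → Fin n)) : Prop :=
  ∀ x ∈ S, sgMul x x = x

def IsCompletelyRegular {n : ℕ} (S : Set (Fin n → Fin n)) : Prop :=
  ∀ x ∈ S, ∃ G, IsSubgroupIn S G ∧ x ∈ G

section GenSg

variable {n : ℕ} {D : Set (Fin n × Fin n)}

lemma arcT_mem_genSg {a b : Fin n} (h : (a, b) ∈ D) : arcT a b ∈ genSg D :=
  ⟨[(a, b)], List.cons_ne_nil _ _, by simpa using h, rfl⟩

lemma arcT_comp_mem_genSg {f : Fin n → Fin n} (hf : f ∈ genSg D) {a b : Fin n}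
    (h : (a, b) ∈ D) : arcT a b ∘ f ∈ genSg D := by
  obtain ⟨l, -, hl, rfl⟩ := hf
  refine ⟨l ++ [(a, b)], by simp, ?_, by simp⟩
  simp only [List.mem_append, List.mem_singleton]
  rintro p (hp | rfl)
  exacts [hl p hp, h]

theorem genSg_induction {P : (Fin n → Fin n) → Prop} (h_id : P id)
    (h_arc : ∀ f, P f → ∀ p ∈ D, P (arcT p.1 p.2 ∘ f)) : ∀ x ∈ genSg D, P x := by
  have key : ∀ l : List (Fin n × Fin n), (∀ p ∈ l, p ∈ D) →
      ∀ f, P f → P (l.foldl (fun f p => arcT p.1 p.2 ∘ f) f) := by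
    intro l
    induction l with
    | nil => exact fun _ _ hf => hf
    | cons p l ih =>
      intro hl f hf
      exact ih (fun q hq => hl q (List.mem_cons_of_mem p hq)) _
        (h_arc f hf p (hl p List.mem_cons_self))
  rintro _ ⟨l, -, hl, rfl⟩
  exact key l hl id h_id

end GenSg

section Subgroups

variable {n : ℕ} {S : Set (Fin n → Fin n)}

lemma isSubgroupIn_singleton {x : Fin n → Fin n} (hx : x ∈ S) (hxx : sgMul x x = x) :
    IsSubgroupIn S {x} := by
  refine ⟨Set.singleton_subset_iff.mpr hx, ?_, x, rfl, ?_, ?_⟩ <;> simp [hxx]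

lemma IsCompletelyRegular.of_isBand (h : IsBand S) : IsCompletelyRegular S :=
  fun x hx => ⟨{x}, isSubgroupIn_singleton hx (h x hx), rfl⟩

lemma IsSubgroupIn.injOn_range {G : Set (Fin n → Fin n)} (hG : IsSubgroupIn S G)
    {α : Fin n → Fin n} (hα : α ∈ G) : Set.InjOn α (Set.range α) := by
  obtain ⟨-, -, e, -, hid, hinv⟩ := hG
  obtain ⟨y, -, hαy, -⟩ := hinv α hα
  have he : ∀ v, e (α v) = α v := congrFun (hid α hα).2
  rintro _ ⟨a, rfl⟩ _ ⟨b, rfl⟩ hab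
  calc α a = e (α a) := (he a).symm
    _ = y (α (α a)) := (congrFun hαy (α a)).symm
    _ = y (α (α b)) := by rw [hab]
    _ = e (α b) := congrFun hαy (α b)
    _ = α b := he b

end Subgroups

section Digraphs

variable {n : ℕ} {D : Set (Fin n × Fin n)}

lemma not_isCompletelyRegular_of_path {u v w : Fin n} (huv : (u, v) ∈ D) (hvw : (v, w) ∈ D)
    (huv' : u ≠ v) (hvw' : v ≠ w) (hwu : w ≠ u) : ¬ IsCompletelyRegular (genSg D) := by
  intro hcr
  set α := arcT u v ∘ arcT v w
  obtain ⟨G, hG, hαG⟩ := hcr α (arcT_comp_mem_genSg (arcT_mem_genSg hvw) huv)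
  have hαu : α u = v := by simp [α, arcT, huv']
  have hαv : α v = w := by simp [α, arcT, hwu]
  have hαw : α w = w := by simp [α, arcT, hvw'.symm, hwu]
  exact hvw' (hG.injOn_range hαG ⟨u, hαu⟩ ⟨v, hαv⟩ (hαv.trans hαw.symm))

lemma SimpleGraph.Connected.exists_adj_to_pair {V : Type*} {G : SimpleGraph V}
    (hG : G.Connected) {a b z : V} (hza : z ≠ a) (hzb : z ≠ b) :
    ∃ x t, x ≠ a ∧ x ≠ b ∧ (t = a ∨ t = b) ∧ G.Adj x t := by
  obtain ⟨p⟩ := hG.preconnected z a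
  obtain ⟨d, -, hd₁, hd₂⟩ := p.exists_boundary_dart {a, b}ᶜ (by simp [hza, hzb]) (by simp)
  rw [Set.notMem_compl_iff] at hd₂
  simp only [Set.mem_compl_iff, Set.mem_insert_iff, Set.mem_singleton_iff, not_or] at hd₁ hd₂
  exact ⟨d.fst, d.snd, hd₁.1, hd₁.2, hd₂, d.adj⟩

lemma IsCompletelyRegular.notMem_of_mem (hcr : IsCompletelyRegular (genSg D)) (hn : 3 ≤ n)
    (hloop : ∀ u : Fin n, (u, u) ∉ D) (hconn : (underlying D).Connected)
    {a b c : Fin n} (hab : (a, b) ∈ D) : (b, c) ∉ D := by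
  intro hbc
  have hab' : a ≠ b := by rintro rfl; exact hloop a hab
  have hbc' : b ≠ c := by rintro rfl; exact hloop b hbc
  by_cases hca : c = a
  · subst hca
    obtain ⟨z, hzc, hzb⟩ := Fin.exists_ne_and_ne_of_two_lt c b hn
    obtain ⟨x, t, hxc, hxb, rfl | rfl, hxt, hx | hx⟩ := hconn.exists_adj_to_pair hzc hzb
    · exact not_isCompletelyRegular_of_path hx hab hxc hab' hxb.symm hcr
    · exact not_isCompletelyRegular_of_path hbc hx hbc' hxt.symm hxb hcr
    · exact not_isCompletelyRegular_of_path hx hbc hxb hbc' hxc.symm hcr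
    · exact not_isCompletelyRegular_of_path hab hx hab' hxt.symm hxc hcr
  · exact not_isCompletelyRegular_of_path hab hbc hab' hbc' hca hcr

lemma directedBipartite_of_forall_notMem (h : ∀ a b c, (a, b) ∈ D → (b, c) ∉ D) :
    DirectedBipartite D :=
  ⟨{v | ∃ w, (v, w) ∈ D}, {v | ∃ w, (v, w) ∈ D}ᶜ, disjoint_compl_right,
    Set.union_compl_self _, fun p hp => ⟨⟨p.2, hp⟩, fun ⟨c, hc⟩ => h p.1 p.2 c hp hc⟩⟩

def FixesAndMovesInto (T : Set (Fin n)) (f : Fin n → Fin n) : Prop :=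
  (∀ v ∈ T, f v = v) ∧ ∀ v, f v = v ∨ f v ∈ T

lemma fixesAndMovesInto_id (T : Set (Fin n)) : FixesAndMovesInto T id :=
  ⟨fun _ _ => rfl, fun _ => .inl rfl⟩

lemma FixesAndMovesInto.arcT_comp {T : Set (Fin n)} {f : Fin n → Fin n}
    (hf : FixesAndMovesInto T f) {a b : Fin n} (ha : a ∉ T) (hb : b ∈ T) :
    FixesAndMovesInto T (arcT a b ∘ f) := by
  obtain ⟨hfix, hmove⟩ := hf
  have hne : ∀ v ∈ T, v ≠ a := fun v hv heq => ha (heq ▸ hv)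
  refine ⟨fun v hv => by simp [arcT, hfix v hv, hne v hv], fun v => ?_⟩
  by_cases hv : f v = a
  · exact .inr (by simp [arcT, hv, hb])
  · simpa [arcT, hv] using hmove v

lemma FixesAndMovesInto.sgMul_self {T : Set (Fin n)} {f : Fin n → Fin n}
    (hf : FixesAndMovesInto T f) : sgMul f f = f := by
  funext v
  rcases hf.2 v with h | h
  · exact congrArg f h
  · exact hf.1 _ h

lemma isBand_genSg_of_directedBipartite (h : DirectedBipartite D) : IsBand (genSg D) := by
  obtain ⟨V₁, V₂, hdisj, -, harc⟩ := h
  have key := genSg_induction (P := FixesAndMovesInto V₂) (fixesAndMovesInto_id V₂)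
    fun f hf p hp => hf.arcT_comp (Set.disjoint_left.mp hdisj (harc p hp).1) (harc p hp).2
  exact fun x hx => (key x hx).sgMul_self

end Digraphs

/-- For a connected digraph with at least three vertices the following
are equivalent: `⟨D⟩` is a band; `⟨D⟩` is completely regular; `D` is directed-bipartite. -/
theorem stmt14 (n : ℕ) (hn : 3 ≤ n) (D : Set (Fin n × Fin n))
    (hloop : ∀ u : Fin n, (u, u) ∉ D) (hconn : (underlying D).Connected) :
    List.TFAE [
      ∀ x ∈ genSg D, sgMul x x = x,
      ∀ x ∈ genSg D, ∃ G, IsSubgroupIn (genSg D) G ∧ x ∈ G,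
      DirectedBipartite D] := by
  tfae_have 1 → 2 := IsCompletelyRegular.of_isBand
  tfae_have 2 → 3 := fun hcr => directedBipartite_of_forall_notMem
    fun _ _ _ => IsCompletelyRegular.notMem_of_mem hcr hn hloop hconn
  tfae_have 3 → 1 := isBand_genSg_of_directedBipartite
  tfae_finish
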